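/- Let n ≥ 1. For all indices 1 ≤ i, j, k, l ≤ n, Σ_{1 ≤ p, q ≤ n} ⟨[Ě_{ij}, Ě_{pq}], [Ě_{kl}, Ě_{pq}]⟩ = 2n δ_{ik} δ_{jl} − 2 δ_{ij} δ_{kl}, where the sum runs over all ordered pairs (p,q) with 1 ≤ p, q ≤ n. -/

import Mathlib

open Matrix

/-- Squared Frobenius norm of a complex matrix: `Re tr (A Aᴴ)`. -/
noncomputable def frobSq {n : ℕ} (A : Matrix (Fin n) (Fin n) ℂ) : ℝ :=
  ((A * Aᴴ).trace).re

/-- Real inner product on complex matrices: `Re tr (A Bᴴ)`. -/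
noncomputable def minner {n : ℕ} (A B : Matrix (Fin n) (Fin n) ℂ) : ℝ :=
  ((A * Bᴴ).trace).re

/-- Commutator of matrices. -/
noncomputable def mcomm {n : ℕ} (A B : Matrix (Fin n) (Fin n) ℂ) : Matrix (Fin n) (Fin n) ℂ :=
  A * B - B * A

/-- The standard orthonormal basis `Ě i j` of the real vector space of `n × n`
Hermitian matrices: `Ě i i = E i i`, `Ě i j = (E i j + E j i)/√2` for `i < j`,
and `Ě i j = 𝐢 (E i j - E j i)/√2` for `i > j`. -/
noncomputable def checkE {n : ℕ} (i j : Fin n) : Matrix (Fin n) (Fin n) ℂ :=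
  if i = j then Matrix.single i i 1
  else if i < j then
    ((Real.sqrt 2 : ℂ))⁻¹ • (Matrix.single i j 1 + Matrix.single j i 1)
  else
    (Complex.I / (Real.sqrt 2 : ℂ)) • (Matrix.single i j 1 - Matrix.single j i 1)

/-- delta -/
def dd {n : ℕ} (x y : Fin n) : ℂ := if x = y then 1 else 0

lemma sqrt2_sq : (Real.sqrt 2 : ℂ) * (Real.sqrt 2 : ℂ) = 2 := by
  rw [← Complex.ofReal_mul, Real.mul_self_sqrt (by norm_num)]
  norm_num

lemma hs2 : ((Real.sqrt 2 : ℂ))⁻¹ * ((Real.sqrt 2 : ℂ))⁻¹ = 1/2 := by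
  rw [← mul_inv, sqrt2_sq]
  norm_num

lemma ht2 : (Complex.I / (Real.sqrt 2 : ℂ)) * (Complex.I / (Real.sqrt 2 : ℂ)) = -(1/2) := by
  rw [div_mul_div_comm, Complex.I_mul_I, mul_comm (Real.sqrt 2 : ℂ), sqrt2_sq]
  norm_num

lemma std_apply {n : ℕ} (i j a b : Fin n) :
    Matrix.single i j (1:ℂ) a b = dd i a * dd j b := by
  unfold Matrix.single dd
  simp only [Matrix.of_apply]
  split_ifs <;> simp_all

lemma checkE_apply {n : ℕ} (i j a b : Fin n) : checkE i j a b =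
    (if i = j then dd i a * dd i b
     else if i < j then ((Real.sqrt 2 : ℂ))⁻¹ * (dd i a * dd j b + dd j a * dd i b)
     else (Complex.I / (Real.sqrt 2 : ℂ)) * (dd i a * dd j b - dd j a * dd i b)) := by
  unfold checkE
  split_ifs <;>
    simp only [Matrix.smul_apply, Matrix.add_apply, Matrix.sub_apply, std_apply, smul_eq_mul]


lemma key_sym {n : ℕ} (a b c d p q : Fin n) :
    checkE p q a b * checkE p q c d + checkE q p a b * checkE q p c d =
      dd p a * dd p d * (dd q b * dd q c) + dd q a * dd q d * (dd p b * dd p c) := by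
  rcases lt_trichotomy p q with h | h | h
  · simp only [checkE_apply, if_neg (ne_of_lt h), if_pos h, if_neg (ne_of_gt h),
      if_neg (not_lt.mpr h.le)]
    linear_combination ((dd p a * dd q b + dd q a * dd p b) * (dd p c * dd q d + dd q c * dd p d)) * hs2
      + ((dd q a * dd p b - dd p a * dd q b) * (dd q c * dd p d - dd p c * dd q d)) * ht2
  · subst h
    simp only [checkE_apply, if_pos rfl, eq_self_iff_true, if_true]
    ring
  · simp only [checkE_apply, if_neg (ne_of_gt h), if_neg (not_lt.mpr h.le), if_neg (ne_of_lt h),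
      if_pos h]
    linear_combination ((dd q a * dd p b + dd p a * dd q b) * (dd q c * dd p d + dd p c * dd q d)) * hs2
      + ((dd p a * dd q b - dd q a * dd p b) * (dd p c * dd q d - dd q c * dd p d)) * ht2

lemma sum_dd {n : ℕ} (a d : Fin n) : ∑ p : Fin n, dd p a * dd p d = dd a d := by
  unfold dd
  simp [ite_and, Finset.sum_ite_eq, eq_comm]

lemma completeness {n : ℕ} (a b c d : Fin n) :
    ∑ p : Fin n, ∑ q : Fin n, checkE p q a b * checkE p q c d = dd a d * dd b c := by
  have h2 : (2:ℂ) * (∑ p : Fin n, ∑ q : Fin n, checkE p q a b * checkE p q c d)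
      = 2 * (dd a d * dd b c) := by
    have swap : ∑ p : Fin n, ∑ q : Fin n, checkE p q a b * checkE p q c d
        = ∑ p : Fin n, ∑ q : Fin n, checkE q p a b * checkE q p c d := Finset.sum_comm
    calc (2:ℂ) * (∑ p : Fin n, ∑ q : Fin n, checkE p q a b * checkE p q c d)
        = ∑ p : Fin n, ∑ q : Fin n, (checkE p q a b * checkE p q c d
            + checkE q p a b * checkE q p c d) := by
          rw [two_mul]
          nth_rewrite 2 [swap]
          rw [← Finset.sum_add_distrib]
          exact Finset.sum_congr rfl fun p _ => (Finset.sum_add_distrib).symm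
      _ = ∑ p : Fin n, ∑ q : Fin n, (dd p a * dd p d * (dd q b * dd q c)
            + dd q a * dd q d * (dd p b * dd p c)) :=
          Finset.sum_congr rfl fun p _ => Finset.sum_congr rfl fun q _ => key_sym a b c d p q
      _ = 2 * (dd a d * dd b c) := by
          simp only [Finset.sum_add_distrib, ← Finset.sum_mul, ← Finset.mul_sum, sum_dd]
          ring
  exact mul_left_cancel₀ (two_ne_zero) h2

lemma swap4 {n : ℕ} (F : Fin n → Fin n → Fin n → Fin n → ℂ) :
    ∑ p : Fin n, ∑ q : Fin n, ∑ b : Fin n, ∑ c : Fin n, F p q b c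
      = ∑ b : Fin n, ∑ c : Fin n, ∑ p : Fin n, ∑ q : Fin n, F p q b c :=
  calc ∑ p : Fin n, ∑ q : Fin n, ∑ b : Fin n, ∑ c : Fin n, F p q b c
      = ∑ p : Fin n, ∑ b : Fin n, ∑ q : Fin n, ∑ c : Fin n, F p q b c :=
        Finset.sum_congr rfl fun p _ => Finset.sum_comm
    _ = ∑ b : Fin n, ∑ p : Fin n, ∑ q : Fin n, ∑ c : Fin n, F p q b c := Finset.sum_comm
    _ = ∑ b : Fin n, ∑ p : Fin n, ∑ c : Fin n, ∑ q : Fin n, F p q b c :=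
        Finset.sum_congr rfl fun b _ => Finset.sum_congr rfl fun p _ => Finset.sum_comm
    _ = ∑ b : Fin n, ∑ c : Fin n, ∑ p : Fin n, ∑ q : Fin n, F p q b c :=
        Finset.sum_congr rfl fun b _ => Finset.sum_comm

lemma sum_sandwich {n : ℕ} (X : Matrix (Fin n) (Fin n) ℂ) :
    ∑ p : Fin n, ∑ q : Fin n, checkE p q * X * checkE p q = X.trace • (1 : Matrix (Fin n) (Fin n) ℂ) := by
  ext a d
  simp only [Matrix.sum_apply]
  have h1 : ∀ p q : Fin n, (checkE p q * X * checkE p q) a d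
      = ∑ b : Fin n, ∑ c : Fin n, X b c * (checkE p q a b * checkE p q c d) := by
    intro p q
    simp only [Matrix.mul_apply, Finset.sum_mul]
    rw [Finset.sum_comm]
    exact Finset.sum_congr rfl fun b _ => Finset.sum_congr rfl fun c _ => by ring
  simp only [h1]
  rw [swap4 (fun p q b c => X b c * (checkE p q a b * checkE p q c d))]
  simp only [← Finset.mul_sum, completeness]
  unfold dd
  simp only [Matrix.smul_apply, Matrix.one_apply, Matrix.trace, Matrix.diag, smul_eq_mul]
  by_cases had : a = d <;>
    simp [had, mul_comm, Finset.mul_sum, ite_and, Finset.sum_ite_eq, eq_comm]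

lemma sum_square {n : ℕ} :
    ∑ p : Fin n, ∑ q : Fin n, checkE p q * checkE p q = (n : ℂ) • (1 : Matrix (Fin n) (Fin n) ℂ) := by
  ext a d
  simp only [Matrix.sum_apply]
  have h1 : ∀ p q : Fin n, (checkE p q * checkE p q) a d
      = ∑ b : Fin n, checkE p q a b * checkE p q b d := fun p q => Matrix.mul_apply
  simp only [h1]
  have h2 : ∀ p : Fin n, ∑ q : Fin n, ∑ b : Fin n, checkE p q a b * checkE p q b d
      = ∑ b : Fin n, ∑ q : Fin n, checkE p q a b * checkE p q b d := fun p => Finset.sum_comm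
  simp only [h2]
  rw [Finset.sum_comm]
  simp only [completeness]
  unfold dd
  simp [Matrix.smul_apply, Matrix.one_apply, Finset.sum_ite_eq, mul_comm, Finset.card_univ]

lemma dd_comm {n : ℕ} (x y : Fin n) : dd x y = dd y x := by
  unfold dd; simp [eq_comm]

lemma sum_dd' {n : ℕ} (a d : Fin n) : ∑ p : Fin n, dd a p * dd d p = dd a d := by
  have e : ∀ p : Fin n, dd a p * dd d p = dd p a * dd p d := fun p => by
    rw [dd_comm a, dd_comm d]
  rw [Finset.sum_congr rfl fun p _ => e p, sum_dd]

lemma dd_self {n : ℕ} (x : Fin n) : dd x x = 1 := by simp [dd]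

lemma dd_of_ne {n : ℕ} {x y : Fin n} (h : x ≠ y) : dd x y = 0 := by simp [dd, h]

lemma dd_zero_of {n : ℕ} {x y z w : Fin n} (h : x = y → z = w → False) :
    dd x y * dd z w = 0 := by
  rcases em (x = y) with h1 | h1
  · rcases em (z = w) with h2 | h2
    · exact (h h1 h2).elim
    · rw [dd_of_ne h2, mul_zero]
  · rw [dd_of_ne h1, zero_mul]

lemma trace_checkE {n : ℕ} (i j : Fin n) : (checkE i j).trace = dd i j := by
  have htr : (checkE i j).trace = ∑ a : Fin n, checkE i j a a := rfl
  rw [htr]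
  by_cases h : i = j
  · subst h
    simp only [checkE_apply, eq_self_iff_true, if_true, sum_dd', dd_self]
  · rw [dd_of_ne h]
    simp only [checkE_apply, if_neg h]
    split_ifs with h2
    · rw [← Finset.mul_sum, Finset.sum_add_distrib, sum_dd', sum_dd', dd_of_ne h,
        dd_of_ne (Ne.symm h)]
      ring
    · rw [← Finset.mul_sum, Finset.sum_sub_distrib, sum_dd', sum_dd', dd_of_ne h,
        dd_of_ne (Ne.symm h)]
      ring

noncomputable def al {n : ℕ} (i j : Fin n) : ℂ :=
  if i = j then 1 else if i < j then ((Real.sqrt 2 : ℂ))⁻¹ else Complex.I / (Real.sqrt 2 : ℂ)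

noncomputable def be {n : ℕ} (i j : Fin n) : ℂ :=
  if i = j then 0 else if i < j then ((Real.sqrt 2 : ℂ))⁻¹ else -(Complex.I / (Real.sqrt 2 : ℂ))

lemma checkE_apply2 {n : ℕ} (i j a b : Fin n) :
    checkE i j a b = al i j * (dd i a * dd j b) + be i j * (dd j a * dd i b) := by
  by_cases h : i = j
  · subst h; rw [checkE_apply, if_pos rfl]; unfold al be; rw [if_pos rfl, if_pos rfl]; ring
  · rw [checkE_apply, if_neg h]; unfold al be; rw [if_neg h, if_neg h]
    split_ifs <;> ring

lemma trmul {n : ℕ} (α β γ δ : ℂ) (i j k l : Fin n) :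
    ∑ a : Fin n, ∑ b : Fin n,
      (α * (dd i a * dd j b) + β * (dd j a * dd i b)) *
        (γ * (dd k b * dd l a) + δ * (dd l b * dd k a))
      = (α * γ + β * δ) * (dd j k * dd i l) + (α * δ + β * γ) * (dd i k * dd j l) := by
  have inner : ∀ a : Fin n, ∑ b : Fin n,
      (α * (dd i a * dd j b) + β * (dd j a * dd i b)) *
        (γ * (dd k b * dd l a) + δ * (dd l b * dd k a))
      = (dd i a * dd l a) * (α * γ * dd j k) + (dd i a * dd k a) * (α * δ * dd j l)
        + (dd j a * dd l a) * (β * γ * dd i k) + (dd j a * dd k a) * (β * δ * dd i l) := by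
    intro a
    have e : ∀ b : Fin n,
        (α * (dd i a * dd j b) + β * (dd j a * dd i b)) *
          (γ * (dd k b * dd l a) + δ * (dd l b * dd k a))
        = (dd j b * dd k b) * (α * γ * (dd i a * dd l a))
          + (dd j b * dd l b) * (α * δ * (dd i a * dd k a))
          + (dd i b * dd k b) * (β * γ * (dd j a * dd l a))
          + (dd i b * dd l b) * (β * δ * (dd j a * dd k a)) := fun b => by ring
    simp only [e]
    simp only [Finset.sum_add_distrib]
    simp only [← Finset.sum_mul]
    simp only [sum_dd']
    ring
  simp only [inner]
  simp only [Finset.sum_add_distrib]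
  simp only [← Finset.sum_mul]
  simp only [sum_dd']
  ring

lemma orth {n : ℕ} (i j k l : Fin n) :
    (checkE i j * checkE k l).trace = dd i k * dd j l := by
  have htr : (checkE i j * checkE k l).trace
      = ∑ a : Fin n, ∑ b : Fin n, checkE i j a b * checkE k l b a := by
    simp [Matrix.trace, Matrix.diag, Matrix.mul_apply]
  rw [htr]
  have e : ∀ a b : Fin n, checkE i j a b * checkE k l b a
      = (al i j * (dd i a * dd j b) + be i j * (dd j a * dd i b))
        * (al k l * (dd k b * dd l a) + be k l * (dd l b * dd k a)) := by
    intro a b; rw [checkE_apply2, checkE_apply2]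
  simp only [e, trmul]
  rcases lt_trichotomy i j with hij | hij | hij <;>
    rcases lt_trichotomy k l with hkl | hkl | hkl
  · -- i < j, k < l
    have hX : dd j k * dd i l = 0 := dd_zero_of fun h1 h2 => by
      subst h1; subst h2; exact absurd (hij.trans hkl) (lt_irrefl _)
    rw [al, be, al, be, if_neg (ne_of_lt hij), if_pos hij, if_neg (ne_of_lt hij), if_pos hij,
      if_neg (ne_of_lt hkl), if_pos hkl, if_neg (ne_of_lt hkl), if_pos hkl]
    linear_combination (2 * (dd j k * dd i l) + 2 * (dd i k * dd j l)) * hs2 + hX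
  · -- i < j, k = l
    subst hkl
    have hX : dd i k * dd j k = 0 := dd_zero_of fun h1 h2 => by
      subst h1; subst h2; exact absurd hij (lt_irrefl _)
    rw [al, be, al, be, if_neg (ne_of_lt hij), if_pos hij, if_neg (ne_of_lt hij), if_pos hij,
      if_pos rfl, if_pos rfl]
    linear_combination (2 * (↑(Real.sqrt 2))⁻¹ - 1) * hX
  · -- i < j, k > l
    have hX : dd i k * dd j l = 0 := dd_zero_of fun h1 h2 => by
      subst h1; subst h2; exact absurd (hij.trans hkl) (lt_irrefl _)
    rw [al, be, al, be, if_neg (ne_of_lt hij), if_pos hij, if_neg (ne_of_lt hij), if_pos hij,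
      if_neg (ne_of_gt hkl), if_neg (not_lt.mpr hkl.le), if_neg (ne_of_gt hkl),
      if_neg (not_lt.mpr hkl.le)]
    linear_combination (-1 : ℂ) * hX
  · -- i = j, k < l
    subst hij
    have hX : dd i k * dd i l = 0 := dd_zero_of fun h1 h2 => by
      subst h1; subst h2; exact absurd hkl (lt_irrefl _)
    rw [al, be, al, be, if_pos rfl, if_pos rfl, if_neg (ne_of_lt hkl), if_pos hkl,
      if_neg (ne_of_lt hkl), if_pos hkl]
    linear_combination (2 * (↑(Real.sqrt 2))⁻¹ - 1) * hX
  · -- i = j, k = l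
    subst hij; subst hkl
    rw [al, be, al, be, if_pos rfl, if_pos rfl, if_pos rfl, if_pos rfl]
    ring
  · -- i = j, k > l
    subst hij
    have hX : dd i k * dd i l = 0 := dd_zero_of fun h1 h2 => by
      subst h1; subst h2; exact absurd hkl (lt_irrefl _)
    rw [al, be, al, be, if_pos rfl, if_pos rfl, if_neg (ne_of_gt hkl),
      if_neg (not_lt.mpr hkl.le), if_neg (ne_of_gt hkl), if_neg (not_lt.mpr hkl.le)]
    linear_combination (-1 : ℂ) * hX
  · -- i > j, k < l
    have hX : dd i k * dd j l = 0 := dd_zero_of fun h1 h2 => by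
      subst h1; subst h2; exact absurd (hkl.trans hij) (lt_irrefl _)
    rw [al, be, al, be, if_neg (ne_of_gt hij), if_neg (not_lt.mpr hij.le),
      if_neg (ne_of_gt hij), if_neg (not_lt.mpr hij.le),
      if_neg (ne_of_lt hkl), if_pos hkl, if_neg (ne_of_lt hkl), if_pos hkl]
    linear_combination (-1 : ℂ) * hX
  · -- i > j, k = l
    subst hkl
    have hX : dd i k * dd j k = 0 := dd_zero_of fun h1 h2 => by
      subst h1; subst h2; exact absurd hij (lt_irrefl _)
    rw [al, be, al, be, if_neg (ne_of_gt hij), if_neg (not_lt.mpr hij.le),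
      if_neg (ne_of_gt hij), if_neg (not_lt.mpr hij.le), if_pos rfl, if_pos rfl]
    linear_combination (-1 : ℂ) * hX
  · -- i > j, k > l
    have hX : dd j k * dd i l = 0 := dd_zero_of fun h1 h2 => by
      subst h1; subst h2; exact absurd (hkl.trans hij) (lt_irrefl _)
    rw [al, be, al, be, if_neg (ne_of_gt hij), if_neg (not_lt.mpr hij.le),
      if_neg (ne_of_gt hij), if_neg (not_lt.mpr hij.le), if_neg (ne_of_gt hkl),
      if_neg (not_lt.mpr hkl.le), if_neg (ne_of_gt hkl), if_neg (not_lt.mpr hkl.le)]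
    linear_combination (2 * (dd j k * dd i l) - 2 * (dd i k * dd j l)) * ht2 - hX

lemma dd_star {n : ℕ} (x y : Fin n) : star (dd x y) = dd x y := by
  unfold dd; split_ifs <;> simp

lemma checkE_herm {n : ℕ} (i j : Fin n) : (checkE i j)ᴴ = checkE i j := by
  ext a b
  rw [Matrix.conjTranspose_apply, checkE_apply2 i j b a, checkE_apply2 i j a b]
  simp only [star_add, star_mul', dd_star]
  rcases lt_trichotomy i j with h | h | h
  · rw [al, be, if_neg (ne_of_lt h), if_pos h, if_neg (ne_of_lt h), if_pos h]
    simp only [Complex.star_def, map_inv₀, Complex.conj_ofReal]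
    ring
  · subst h
    rw [al, be, if_pos rfl, if_pos rfl]
    simp only [star_one, star_zero]
    ring
  · rw [al, be, if_neg (ne_of_gt h), if_neg (not_lt.mpr h.le), if_neg (ne_of_gt h),
      if_neg (not_lt.mpr h.le)]
    simp only [Complex.star_def, map_neg, map_div₀, Complex.conj_I, Complex.conj_ofReal]
    ring

theorem checkE_commutator_sum (n : ℕ) (hn : 1 ≤ n) (i j k l : Fin n) :
    ∑ p : Fin n, ∑ q : Fin n,
        minner (mcomm (checkE i j) (checkE p q)) (mcomm (checkE k l) (checkE p q)) =
      2 * n * (if i = k then 1 else 0) * (if j = l then 1 else 0) -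
        2 * (if i = j then 1 else 0) * (if k = l then 1 else 0) := by
  set A := checkE i j with hA
  set B := checkE k l with hB
  have hAH : Aᴴ = A := checkE_herm i j
  have hBH : Bᴴ = B := checkE_herm k l
  have hTH : ∀ p q : Fin n, (checkE p q)ᴴ = checkE p q := checkE_herm
  have htr : ∀ p q : Fin n,
      (mcomm A (checkE p q) * (mcomm B (checkE p q))ᴴ).trace
        = ((B * A) * (checkE p q * checkE p q)).trace
          + ((A * B) * (checkE p q * checkE p q)).trace
          - (A * (checkE p q * B * checkE p q)).trace
          - (B * (checkE p q * A * checkE p q)).trace := by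
    intro p q
    set T := checkE p q with hT
    have hMH : (mcomm B T)ᴴ = T * B - B * T := by
      unfold mcomm
      rw [Matrix.conjTranspose_sub, Matrix.conjTranspose_mul, Matrix.conjTranspose_mul,
        hBH, hTH p q]
    have h1 : mcomm A T * (mcomm B T)ᴴ
        = A * (T * (T * B)) + T * (A * (B * T)) - A * (T * (B * T)) - T * (A * (T * B)) := by
      rw [hMH]
      unfold mcomm
      noncomm_ring
    rw [h1, Matrix.trace_sub, Matrix.trace_sub, Matrix.trace_add]
    have t1 : (A * (T * (T * B))).trace = ((B * A) * (T * T)).trace := by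
      rw [show A * (T * (T * B)) = (A * (T * T)) * B from by noncomm_ring,
        Matrix.trace_mul_comm]
      congr 1
      noncomm_ring
    have t2 : (T * (A * (B * T))).trace = ((A * B) * (T * T)).trace := by
      rw [show T * (A * (B * T)) = T * ((A * B) * T) from by noncomm_ring,
        Matrix.trace_mul_comm]
      congr 1
      noncomm_ring
    have t3 : (A * (T * (B * T))).trace = (A * (T * B * T)).trace := by
      congr 1
      noncomm_ring
    have t4 : (T * (A * (T * B))).trace = (B * (T * A * T)).trace := by
      rw [show T * (A * (T * B)) = (T * (A * T)) * B from by noncomm_ring,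
        Matrix.trace_mul_comm]
      congr 1
      noncomm_ring
    rw [t1, t2, t3, t4]
  have hsum : ∑ p : Fin n, ∑ q : Fin n,
      (mcomm A (checkE p q) * (mcomm B (checkE p q))ᴴ).trace
      = 2 * (n : ℂ) * (dd i k * dd j l) - 2 * (dd i j * dd k l) := by
    simp only [htr]
    simp only [Finset.sum_sub_distrib, Finset.sum_add_distrib]
    have pull : ∀ M : Matrix (Fin n) (Fin n) ℂ,
        ∀ G : Fin n → Fin n → Matrix (Fin n) (Fin n) ℂ,
        ∑ p : Fin n, ∑ q : Fin n, (M * G p q).trace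
          = (M * ∑ p : Fin n, ∑ q : Fin n, G p q).trace := by
      intro M G
      rw [Finset.mul_sum, Matrix.trace_sum]
      refine Finset.sum_congr rfl fun p _ => ?_
      rw [Finset.mul_sum, Matrix.trace_sum]
    rw [pull (B * A) (fun p q => checkE p q * checkE p q),
      pull (A * B) (fun p q => checkE p q * checkE p q),
      pull A (fun p q => checkE p q * B * checkE p q),
      pull B (fun p q => checkE p q * A * checkE p q),
      sum_square, sum_sandwich B, sum_sandwich A]
    simp only [Matrix.mul_smul, Matrix.mul_one, Matrix.trace_smul]
    have horth : (A * B).trace = dd i k * dd j l := orth i j k l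
    have horth' : (B * A).trace = dd i k * dd j l := by
      rw [Matrix.trace_mul_comm, horth]
    have htrA : A.trace = dd i j := trace_checkE i j
    have htrB : B.trace = dd k l := trace_checkE k l
    rw [horth, horth', htrA, htrB]
    simp only [smul_eq_mul]
    ring
  have hre : ∑ p : Fin n, ∑ q : Fin n,
      minner (mcomm A (checkE p q)) (mcomm B (checkE p q))
      = (∑ p : Fin n, ∑ q : Fin n,
          (mcomm A (checkE p q) * (mcomm B (checkE p q))ᴴ).trace).re := by
    rw [Complex.re_sum]
    refine Finset.sum_congr rfl fun p _ => ?_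
    rw [Complex.re_sum]
    rfl
  rw [hre, hsum]
  unfold dd
  split_ifs <;> simp
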